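/- The graph M is 2-arc-regular: for any triples (x0, x1, x2) and (y0, y1, y2) of vertices of M with x0 adjacent to x1, x1 adjacent to x2, x0 ≠ x2, and likewise y0 adjacent to y1, y1 adjacent to y2, y0 ≠ y2, there exists exactly one graph automorphism φ of M with φ x0 = y0, φ x1 = y1 and φ x2 = y2. -/

import Mathlib

/-!
Existence: the maps `v ↦ v + 2k` and `v ↦ 2k + 1 - v` make `M` vertex-transitive, and two
involutions fixing `1` generate the full symmetric group on its neighbours `0, 2, 12`; together
they carry the 2-arc `(0, 1, 2)` onto every 2-arc.

Uniqueness: for every 2-arc `(a, b, c)` the three neighbours of `c` have pairwise different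
numbers of walks of length 3 to `a` (checked on `(0, 1, 2)` and transported by the existence
part). Walk counts are invariant under automorphisms, so an automorphism fixing `a` and `c` fixes
every neighbour of `c`. As `M` is connected with minimum degree at least 2, this propagates along
edges, and the automorphism is the identity.
-/

/-- The Möbius–Kantor graph, realized as the graph on `ZMod 16` in which
distinct `x, y` are adjacent iff there are `a ∈ {0, 1, 3}` and `v : ZMod 16`
with `v.val` even such that `{x, y} = {v, v + (2a - 1)}`. -/
def MKGraph : SimpleGraph (ZMod 16) where
  Adj x y := x ≠ y ∧ ∃ a ∈ ({0, 1, 3} : Set ℕ), ∃ v : ZMod 16, Even v.val ∧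
    s(x, y) = s(v, v + (2 * (a : ZMod 16) - 1))
  symm := by
    constructor
    rintro x y ⟨hxy, a, ha, v, hv, h⟩
    exact ⟨hxy.symm, a, ha, v, hv, Sym2.eq_swap.trans h⟩
  loopless := by
    constructor
    rintro x ⟨hxx, -⟩
    exact hxx rfl

open Equiv

namespace SimpleGraph

section TwoArcs

variable {V : Type*} {G : SimpleGraph V}

theorem exists_iso_map_twoArc {a x c : V} (hvert : ∀ v, ∃ φ : G ≃g G, φ x = v)
    (hstab : ∀ u w, G.Adj x u → G.Adj x w → u ≠ w →
      ∃ φ : G ≃g G, φ a = u ∧ φ x = x ∧ φ c = w)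
    {y₀ y₁ y₂ : V} (h₀₁ : G.Adj y₀ y₁) (h₁₂ : G.Adj y₁ y₂) (h₀₂ : y₀ ≠ y₂) :
    ∃ φ : G ≃g G, φ a = y₀ ∧ φ x = y₁ ∧ φ c = y₂ := by
  obtain ⟨τ, rfl⟩ := hvert y₁
  obtain ⟨ρ, h₀, hx, h₂⟩ := hstab (τ.symm y₀) (τ.symm y₂)
    (by simpa using τ.symm.map_adj_iff.2 h₀₁.symm) (by simpa using τ.symm.map_adj_iff.2 h₁₂)
    (by simpa using h₀₂)
  exact ⟨ρ.trans τ, by simp [h₀], by simp [hx], by simp [h₂]⟩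

theorem existsUnique_iso_map_twoArc {a b c : V}
    (htrans : ∀ x₀ x₁ x₂, G.Adj x₀ x₁ → G.Adj x₁ x₂ → x₀ ≠ x₂ →
      ∃ φ : G ≃g G, φ a = x₀ ∧ φ b = x₁ ∧ φ c = x₂)
    (hrigid : ∀ σ : G ≃g G, σ a = a → σ b = b → σ c = c → σ = RelIso.refl G.Adj)
    {x₀ x₁ x₂ y₀ y₁ y₂ : V} (hx₀₁ : G.Adj x₀ x₁) (hx₁₂ : G.Adj x₁ x₂) (hx₀₂ : x₀ ≠ x₂)
    (hy₀₁ : G.Adj y₀ y₁) (hy₁₂ : G.Adj y₁ y₂) (hy₀₂ : y₀ ≠ y₂) :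
    ∃! φ : G ≃g G, φ x₀ = y₀ ∧ φ x₁ = y₁ ∧ φ x₂ = y₂ := by
  obtain ⟨φx, rfl, rfl, rfl⟩ := htrans x₀ x₁ x₂ hx₀₁ hx₁₂ hx₀₂
  obtain ⟨φy, rfl, rfl, rfl⟩ := htrans y₀ y₁ y₂ hy₀₁ hy₁₂ hy₀₂
  refine ⟨φx.symm.trans φy, by simp, fun ψ ⟨h₀, h₁, h₂⟩ => ?_⟩
  have hfix := hrigid ((φx.trans ψ).trans φy.symm) (by simp [h₀]) (by simp [h₁]) (by simp [h₂])
  ext v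
  simpa using congr(φy ($hfix (φx.symm v)))

end TwoArcs

section WalkCount

variable {V W : Type*} [DecidableEq V] [DecidableEq W]

def walkCount (G : SimpleGraph V) [G.LocallyFinite] : ℕ → V → V → ℕ
  | 0, u, v => if u = v then 1 else 0
  | n + 1, u, v => ∑ w ∈ G.neighborFinset u, G.walkCount n w v

variable {G : SimpleGraph V} {H : SimpleGraph W} [G.LocallyFinite] [H.LocallyFinite]

theorem Iso.walkCount_apply (σ : G ≃g H) (n : ℕ) (u v : V) :
    H.walkCount n (σ u) (σ v) = G.walkCount n u v := by
  induction n generalizing u with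
  | zero => simp [walkCount]
  | succ n ih =>
    refine (Finset.sum_equiv σ.toEquiv (fun w => ?_) (fun w _ => ?_)).symm
    · simpa using σ.map_adj_iff.symm
    · exact (ih w).symm

theorem Iso.injOn_walkCount (σ : G ≃g H) {n : ℕ} {a c : V}
    (h : Set.InjOn (G.walkCount n · a) (G.neighborSet c)) :
    Set.InjOn (H.walkCount n · (σ a)) (H.neighborSet (σ c)) := by
  intro w hw w' hw' hww'
  obtain ⟨x, rfl⟩ := σ.surjective w
  obtain ⟨x', rfl⟩ := σ.surjective w'
  simp only [mem_neighborSet, σ.map_adj_iff, σ.walkCount_apply] at hw hw' hww' ⊢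
  rw [h hw hw' hww']

theorem Iso.apply_eq_self_of_injOn_walkCount (σ : G ≃g G) {n : ℕ} {a c d : V}
    (h : Set.InjOn (G.walkCount n · a) (G.neighborSet c)) (ha : σ a = a) (hc : σ c = c)
    (hd : G.Adj c d) : σ d = d :=
  h (by simpa [hc] using σ.map_adj_iff.2 hd) hd (by simpa [ha] using σ.walkCount_apply n d a)

theorem Iso.eq_refl_of_injOn_walkCount (hconn : G.Connected) (hdeg : ∀ v, 2 ≤ G.degree v)
    {n : ℕ} (hinj : ∀ a b c, G.Adj a b → G.Adj b c → a ≠ c →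
      Set.InjOn (G.walkCount n · a) (G.neighborSet c))
    (σ : G ≃g G) {a b c : V} (hab : G.Adj a b) (hbc : G.Adj b c) (hac : a ≠ c)
    (ha : σ a = a) (hc : σ c = c) : σ = RelIso.refl G.Adj := by
  let FixesStar (v : V) : Prop := σ v = v ∧ ∀ w, G.Adj v w → σ w = w
  have start : FixesStar c :=
    ⟨hc, fun _ => σ.apply_eq_self_of_injOn_walkCount (hinj a b c hab hbc hac) ha hc⟩
  have step {u v : V} (hu : FixesStar u) (huv : G.Adj u v) : FixesStar v := by
    obtain ⟨a', ha'u, ha'v⟩ := Finset.exists_mem_ne (hdeg u) v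
    rw [mem_neighborFinset] at ha'u
    exact ⟨hu.2 v huv, fun _ => σ.apply_eq_self_of_injOn_walkCount
      (hinj a' u v ha'u.symm huv ha'v) (hu.2 a' ha'u) (hu.2 v huv)⟩
  have all (v : V) : FixesStar v := by
    induction (reachable_iff_reflTransGen c v).1 (hconn.preconnected c v) with
    | refl => exact start
    | tail _ huv ih => exact step ih huv
  exact RelIso.ext fun v => (all v).1

end WalkCount

end SimpleGraph

namespace MKGraph

theorem adj_iff {x y : ZMod 16} :
    MKGraph.Adj x y ↔ (Even x.val ∧ (y = x + 1 ∨ y = x - 1 ∨ y = x + 5)) ∨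
      (Even y.val ∧ (x = y + 1 ∨ x = y - 1 ∨ x = y + 5)) := by
  have hd {d : ZMod 16} : (d = 1 ∨ d = -1 ∨ d = 5) ↔
      ∃ a ∈ ({0, 1, 3} : Set ℕ), 2 * (a : ZMod 16) - 1 = d := by
    constructor
    · rintro (rfl | rfl | rfl)
      exacts [⟨1, by simp, by decide⟩, ⟨0, by simp, by decide⟩, ⟨3, by simp, by decide⟩]
    · rintro ⟨a, ha | ha | ha, rfl⟩ <;> subst ha <;> decide
  constructor
  · rintro ⟨-, a, ha, v, hv, hxy⟩
    generalize hda : 2 * (a : ZMod 16) - 1 = d at hxy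
    have hd' := hd.2 ⟨a, ha, hda⟩
    rcases Sym2.eq_iff.1 hxy with ⟨rfl, rfl⟩ | ⟨rfl, rfl⟩ <;>
      rcases hd' with rfl | rfl | rfl <;> simp [hv, sub_eq_add_neg]
  · have key {v w : ZMod 16} (hv : Even v.val) (hw : w = v + 1 ∨ w = v - 1 ∨ w = v + 5) :
        v ≠ w ∧ ∃ a ∈ ({0, 1, 3} : Set ℕ), ∃ u : ZMod 16, Even u.val ∧
          s(v, w) = s(u, u + (2 * (a : ZMod 16) - 1)) := by
      have hwv : w - v = 1 ∨ w - v = -1 ∨ w - v = 5 := by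
        rcases hw with rfl | rfl | rfl <;> simp
      obtain ⟨a, ha, hda⟩ := hd.1 hwv
      refine ⟨fun h => ?_, a, ha, v, hv, by rw [hda, add_sub_cancel]⟩
      rw [h, sub_self] at hwv
      revert hwv; decide
    rintro (⟨hx, hy⟩ | ⟨hy, hx⟩)
    · exact key hx hy
    · obtain ⟨hne, h⟩ := key hy hx
      exact ⟨hne.symm, by simpa only [Sym2.eq_swap] using h⟩

instance : DecidableRel MKGraph.Adj := fun _ _ => decidable_of_iff _ adj_iff.symm

-- `ZMod 16` is definitionally `Fin 16`, the vertex type of `cycleGraph 16`.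
theorem connected : MKGraph.Connected :=
  .mono (G := SimpleGraph.cycleGraph 16)
    (fun x y => (by decide : ∀ x y : ZMod 16, x - y = 1 ∨ y - x = 1 → MKGraph.Adj x y) x y)
    SimpleGraph.cycleGraph_connected

theorem two_le_degree : ∀ v, 2 ≤ MKGraph.degree v := by decide

theorem adj_add_two_mul (k x y : ZMod 16) :
    MKGraph.Adj (x + 2 * k) (y + 2 * k) ↔ MKGraph.Adj x y := by
  revert k x y; decide

theorem adj_two_mul_add_one_sub (k x y : ZMod 16) :
    MKGraph.Adj (2 * k + 1 - x) (2 * k + 1 - y) ↔ MKGraph.Adj x y := by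
  revert k x y; decide

theorem exists_iso_apply_one (v : ZMod 16) : ∃ φ : MKGraph ≃g MKGraph, φ 1 = v := by
  obtain ⟨k, rfl | rfl⟩ : ∃ k : ZMod 16, v = 2 * k + 1 ∨ v = 2 * k := by revert v; decide
  · exact ⟨⟨Equiv.addRight (2 * k), adj_add_two_mul k _ _⟩, add_comm (1 : ZMod 16) (2 * k)⟩
  · exact ⟨⟨Equiv.subLeft (2 * k + 1), adj_two_mul_add_one_sub k _ _⟩,
      add_sub_cancel_right (2 * k) 1⟩

def swapZeroTwelve : MKGraph ≃g MKGraph :=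
  ⟨swap 0 12 * swap 4 8 * swap 6 14 * swap 3 7 * swap 5 13 * swap 11 15, by decide⟩

def swapZeroTwo : MKGraph ≃g MKGraph :=
  ⟨swap 0 2 * swap 3 5 * swap 6 14 * swap 7 15 * swap 8 10 * swap 11 13, by decide⟩

theorem exists_iso_fix_one (u w : ZMod 16) (hu : MKGraph.Adj 1 u) (hw : MKGraph.Adj 1 w)
    (huw : u ≠ w) : ∃ φ : MKGraph ≃g MKGraph, φ 0 = u ∧ φ 1 = 1 ∧ φ 2 = w := by
  have hS₃ : ∀ u w, MKGraph.Adj 1 u → MKGraph.Adj 1 w → u ≠ w →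
      ∃ φ ∈ ([.refl, swapZeroTwelve, swapZeroTwo, swapZeroTwelve.trans swapZeroTwo,
        swapZeroTwo.trans swapZeroTwelve, swapZeroTwelve.trans (swapZeroTwo.trans swapZeroTwelve)] :
          List (MKGraph ≃g MKGraph)),
      φ 0 = u ∧ φ 1 = 1 ∧ φ 2 = w := by
    set_option maxRecDepth 4000 in decide
  obtain ⟨φ, -, hφ⟩ := hS₃ u w hu hw huw
  exact ⟨φ, hφ⟩

theorem exists_iso_map_twoArc {y₀ y₁ y₂ : ZMod 16} (h₀₁ : MKGraph.Adj y₀ y₁)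
    (h₁₂ : MKGraph.Adj y₁ y₂) (h₀₂ : y₀ ≠ y₂) :
    ∃ φ : MKGraph ≃g MKGraph, φ 0 = y₀ ∧ φ 1 = y₁ ∧ φ 2 = y₂ :=
  SimpleGraph.exists_iso_map_twoArc exists_iso_apply_one exists_iso_fix_one h₀₁ h₁₂ h₀₂

theorem injOn_walkCount {a b c : ZMod 16} (hab : MKGraph.Adj a b) (hbc : MKGraph.Adj b c)
    (hac : a ≠ c) : Set.InjOn (MKGraph.walkCount 3 · a) (MKGraph.neighborSet c) := by
  obtain ⟨φ, rfl, -, rfl⟩ := exists_iso_map_twoArc hab hbc hac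
  refine φ.injOn_walkCount fun w hw w' hw' => ?_
  exact (by decide : ∀ w w', MKGraph.Adj 2 w → MKGraph.Adj 2 w' →
    MKGraph.walkCount 3 w 0 = MKGraph.walkCount 3 w' 0 → w = w') w w' hw hw'

end MKGraph

/-- The Möbius–Kantor graph is 2-arc-regular. -/
theorem stmt_13 (x0 x1 x2 y0 y1 y2 : ZMod 16)
    (hx01 : MKGraph.Adj x0 x1) (hx12 : MKGraph.Adj x1 x2) (hx02 : x0 ≠ x2)
    (hy01 : MKGraph.Adj y0 y1) (hy12 : MKGraph.Adj y1 y2) (hy02 : y0 ≠ y2) :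
    ∃! φ : MKGraph ≃g MKGraph, φ x0 = y0 ∧ φ x1 = y1 ∧ φ x2 = y2 := by
  refine SimpleGraph.existsUnique_iso_map_twoArc (fun _ _ _ => MKGraph.exists_iso_map_twoArc)
    ?_ hx01 hx12 hx02 hy01 hy12 hy02
  intro σ h0 _ h2
  exact σ.eq_refl_of_injOn_walkCount MKGraph.connected MKGraph.two_le_degree
    (fun _ _ _ => MKGraph.injOn_walkCount) (by decide : MKGraph.Adj 0 1) (by decide) (by decide)
    h0 h2
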